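/- Let A be a positive conjunctive TABG with flat theory E, let r be a run of A, and let r' be the global pumping r[r|_{I(p̄1)}]_{p̄1}…[r|_{I(p̄n)}]_{p̄n} on r with indexes 1 ≤ j < i ≤ height(r) and pump-injection I. Let p1, p2 be positions of r such that each of them is a prefix of some position in H_i ∪ Ȟ_i ∪ H̊_i. Then p1 and p2 are positions of r', and term(r|_{p1}) =_E term(r|_{p2}) holds iff term(r'|_{p1}) =_E term(r'|_{p2}) holds. -/

import Mathlib

set_option maxHeartbeats 1000000

namespace TreeAut

/-! ### Ranked terms -/

/-- Ranked terms over a symbol type `F` (arities are imposed by well-formedness). -/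
inductive RTerm (F : Type) : Type
  | node : F → List (RTerm F) → RTerm F

namespace RTerm

def rootLabel {F : Type} : RTerm F → F
  | .node f _ => f

/-- `SubAt t p s` : the subterm of `t` at position `p` is `s`. -/
inductive SubAt {F : Type} : RTerm F → List ℕ → RTerm F → Prop
  | refl (t : RTerm F) : SubAt t [] t
  | step {f : F} {ts : List (RTerm F)} {i : ℕ} {u s : RTerm F} {p : List ℕ} :
      ts[i]? = some u → SubAt u p s → SubAt (RTerm.node f ts) (i :: p) s

/-- `p` is a position of `t`. -/
def IsPos {F : Type} (t : RTerm F) (p : List ℕ) : Prop := ∃ s, SubAt t p s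

/-- `ReplAt t p s t'` : `t'` is the result of replacing in `t` the subterm at `p` by `s`. -/
inductive ReplAt {F : Type} : RTerm F → List ℕ → RTerm F → RTerm F → Prop
  | here (t s : RTerm F) : ReplAt t [] s s
  | step {f : F} {ts : List (RTerm F)} {i : ℕ} {u u' s : RTerm F} {p : List ℕ} :
      ts[i]? = some u → ReplAt u p s u' →
      ReplAt (RTerm.node f ts) (i :: p) s (RTerm.node f (ts.set i u'))

/-- Height of a term: the maximal length of a position. -/
def height {F : Type} : RTerm F → ℕ
  | .node _ [] => 0
  | .node f (t :: ts) => max (height t + 1) (height (RTerm.node f ts))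

/-- Well-formedness of a term with respect to an arity function. -/
inductive WF {F : Type} (ar : F → ℕ) : RTerm F → Prop
  | node {f : F} {ts : List (RTerm F)} :
      ts.length = ar f → (∀ u ∈ ts, WF ar u) → WF ar (RTerm.node f ts)

/-- A constant, i.e. a term reduced to a symbol (of arity 0). -/
def IsConst {F : Type} (t : RTerm F) : Prop := ∃ c : F, t = RTerm.node c []

/-- Relabeling of a term. -/
def map {F G : Type} (g : F → G) : RTerm F → RTerm G
  | .node f ts => RTerm.node (g f) (ts.attach.map (fun u => map g u.1))
decreasing_by
  simp only [RTerm.node.sizeOf_spec]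
  have := List.sizeOf_lt_of_mem u.2
  omega

end RTerm

/-! ### Patterns (terms with variables) and flat equational theories -/

/-- Terms with variables (variables are natural numbers). -/
inductive Pat (F : Type) : Type
  | var : ℕ → Pat F
  | node : F → List (Pat F) → Pat F

namespace Pat

def subst {F : Type} (σ : ℕ → RTerm F) : Pat F → RTerm F
  | .var v => σ v
  | .node f ps => RTerm.node f (ps.attach.map (fun p => subst σ p.1))
decreasing_by
  simp only [Pat.node.sizeOf_spec]
  have := List.sizeOf_lt_of_mem p.2
  omega

def height {F : Type} : Pat F → ℕ
  | .var _ => 0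
  | .node _ [] => 0
  | .node f (p :: ps) => max (height p + 1) (height (Pat.node f ps))

inductive HasVar {F : Type} (v : ℕ) : Pat F → Prop
  | var : HasVar v (Pat.var v)
  | node {f : F} {ps : List (Pat F)} {p : Pat F} :
      p ∈ ps → HasVar v p → HasVar v (Pat.node f ps)

inductive WF {F : Type} (ar : F → ℕ) : Pat F → Prop
  | var (v : ℕ) : WF ar (Pat.var v)
  | node {f : F} {ps : List (Pat F)} :
      ps.length = ar f → (∀ p ∈ ps, WF ar p) → WF ar (Pat.node f ps)

end Pat

/-- A flat equation: both sides well-formed, of the same height which is at most 1,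
and with the same variables. -/
def IsFlatEq {F : Type} (ar : F → ℕ) (e : Pat F × Pat F) : Prop :=
  e.1.WF ar ∧ e.2.WF ar ∧ e.1.height = e.2.height ∧ e.1.height ≤ 1 ∧
  (∀ v : ℕ, Pat.HasVar v e.1 ↔ Pat.HasVar v e.2)

/-- One rewrite step using an equation of `E` (in either direction) at some position. -/
def Rew {F : Type} (E : List (Pat F × Pat F)) (s t : RTerm F) : Prop :=
  ∃ l r : Pat F, ((l, r) ∈ E ∨ (r, l) ∈ E) ∧
    ∃ (σ : ℕ → RTerm F) (p : List ℕ),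
      RTerm.SubAt s p (l.subst σ) ∧ RTerm.ReplAt s p (r.subst σ) t

/-- Equivalence modulo the set of equations `E`. -/
def EqE {F : Type} (E : List (Pat F × Pat F)) : RTerm F → RTerm F → Prop :=
  Relation.ReflTransGen (Rew E)

/-! ### Global constraints -/

/-- Transition rule of a tree automaton with constraints between brothers:
`sym(args) → res` with brother equalities `bcEq` and disequalities `bcNeq`
(1-based indices of children). -/
structure Rule (F Q : Type) where
  sym : F
  args : List Q
  bcEq : List (ℕ × ℕ)
  bcNeq : List (ℕ × ℕ)
  res : Q

/-- Atomic global constraints: `q ≈ q'`, `q ≉ q'`, and linear inequalities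
`Σ c·|q| ≥ a` (type `|.|`) and `Σ c·‖q‖ ≥ a` (type `‖.‖`). -/
inductive GAtom (Q : Type) : Type
  | eq : Q → Q → GAtom Q
  | neq : Q → Q → GAtom Q
  | cnt : List (ℤ × Q) → ℤ → GAtom Q
  | cls : List (ℤ × Q) → ℤ → GAtom Q

/-- Boolean combinations of atomic global constraints. -/
inductive GC (Q : Type) : Type
  | tt : GC Q
  | ff : GC Q
  | atom : GAtom Q → GC Q
  | and : GC Q → GC Q → GC Q
  | or : GC Q → GC Q → GC Q
  | not : GC Q → GC Q

/-- The set of `=E`-equivalence classes of members of a set of terms. -/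
def classesOf {F : Type} (E : List (Pat F × Pat F)) (S : Set (RTerm F)) :
    Set (Set (RTerm F)) :=
  {C | ∃ t ∈ S, C = {u | EqE E t u}}

section Sat

variable {β F Q : Type}

/-- Positions of a (run) tree where the node has state `q`
(`st` extracts the state of a node label). -/
def stPos (st : β → Q) (r : RTerm β) (q : Q) : Set (List ℕ) :=
  {p | ∃ s, RTerm.SubAt r p s ∧ st s.rootLabel = q}

/-- `⟦|q|⟧` : the number of positions with state `q`. -/
noncomputable def stCount (st : β → Q) (r : RTerm β) (q : Q) : ℕ :=
  (stPos st r q).ncard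

/-- Terms occurring below positions with state `q`. -/
def stTerms (st : β → Q) (sy : β → F) (r : RTerm β) (q : Q) : Set (RTerm F) :=
  {t | ∃ p s, RTerm.SubAt r p s ∧ st s.rootLabel = q ∧ s.map sy = t}

/-- `⟦‖q‖⟧` : the number of `=E`-classes of terms at positions with state `q`. -/
noncomputable def clsCount (E : List (Pat F × Pat F)) (st : β → Q) (sy : β → F)
    (r : RTerm β) (q : Q) : ℕ :=
  (classesOf E (stTerms st sy r q)).ncard

/-- Satisfaction of a global atomic constraint by a run tree. -/
def satAtom (E : List (Pat F × Pat F)) (st : β → Q) (sy : β → F) (r : RTerm β) :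
    GAtom Q → Prop
  | .eq q q' => ∀ p p' s s', p ≠ p' → RTerm.SubAt r p s → RTerm.SubAt r p' s' →
      st s.rootLabel = q → st s'.rootLabel = q' → EqE E (s.map sy) (s'.map sy)
  | .neq q q' => ∀ p p' s s', p ≠ p' → RTerm.SubAt r p s → RTerm.SubAt r p' s' →
      st s.rootLabel = q → st s'.rootLabel = q' → ¬ EqE E (s.map sy) (s'.map sy)
  | .cnt l a => a ≤ (l.map (fun cq => cq.1 * (stCount st r cq.2 : ℤ))).sum
  | .cls l a => a ≤ (l.map (fun cq => cq.1 * (clsCount E st sy r cq.2 : ℤ))).sum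

/-- Satisfaction of a global constraint by a run tree. -/
def satGC (E : List (Pat F × Pat F)) (st : β → Q) (sy : β → F) (r : RTerm β) :
    GC Q → Prop
  | .tt => True
  | .ff => False
  | .atom a => satAtom E st sy r a
  | .and c d => satGC E st sy r c ∧ satGC E st sy r d
  | .or c d => satGC E st sy r c ∨ satGC E st sy r d
  | .not c => ¬ satGC E st sy r c

end Sat

/-! ### Tree automata with global and brother constraints modulo a flat theory -/

/-- A run is represented as a tree labeled by the rules applied at each position. -/
abbrev Run (F Q : Type) := RTerm (Rule F Q)

def Run.state {F Q : Type} (r : Run F Q) : Q := (RTerm.rootLabel r).res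
def Run.term {F Q : Type} (r : Run F Q) : RTerm F := r.map Rule.sym

/-- `r` is a structurally correct run using rules of `Δ`, whose local brother
constraints are satisfied modulo `E`. -/
inductive IsRun {F Q : Type} (Δ : List (Rule F Q)) (E : List (Pat F × Pat F)) :
    Run F Q → Prop
  | node {ρ : Rule F Q} {rs : List (Run F Q)} :
      ρ ∈ Δ →
      ρ.args = rs.map Run.state →
      (∀ r ∈ rs, IsRun Δ E r) →
      (∀ i j ri rj, (i, j) ∈ ρ.bcEq → rs[i - 1]? = some ri →
        rs[j - 1]? = some rj → EqE E ri.term rj.term) →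
      (∀ i j ri rj, (i, j) ∈ ρ.bcNeq → rs[i - 1]? = some ri →
        rs[j - 1]? = some rj → ¬ EqE E ri.term rj.term) →
      IsRun Δ E (RTerm.node ρ rs)

/-- Tree automaton with brother constraints and global constraints modulo a flat theory. -/
structure TABG (F Q : Type) where
  arity : F → ℕ
  stQ : Finset Q
  rules : List (Rule F Q)
  final : List Q
  eqs : List (Pat F × Pat F)
  gc : GC Q

def TABG.IsAccRun {F Q : Type} (A : TABG F Q) (r : Run F Q) : Prop :=
  IsRun A.rules A.eqs r ∧ satGC A.eqs Rule.res Rule.sym r A.gc ∧ r.state ∈ A.final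

def TABG.Lang {F Q : Type} (A : TABG F Q) : Set (RTerm F) :=
  {t | ∃ r : Run F Q, A.IsAccRun r ∧ r.term = t}

def Rule.WFr {F Q : Type} (ar : F → ℕ) (S : Finset Q) (ρ : Rule F Q) : Prop :=
  ρ.args.length = ar ρ.sym ∧ ρ.res ∈ S ∧ (∀ q ∈ ρ.args, q ∈ S) ∧
  (∀ ij ∈ ρ.bcEq, 1 ≤ ij.1 ∧ ij.1 ≤ ρ.args.length ∧ 1 ≤ ij.2 ∧ ij.2 ≤ ρ.args.length) ∧
  (∀ ij ∈ ρ.bcNeq, 1 ≤ ij.1 ∧ ij.1 ≤ ρ.args.length ∧ 1 ≤ ij.2 ∧ ij.2 ≤ ρ.args.length)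

/-- Well-formedness of a TABG: the equational theory is flat, the rules respect
the arities and the state set, and final states belong to the state set. -/
def TABG.WF {F Q : Type} (A : TABG F Q) : Prop :=
  (∀ e ∈ A.eqs, IsFlatEq A.arity e) ∧
  (∀ ρ ∈ A.rules, ρ.WFr A.arity A.stQ) ∧
  (∀ q ∈ A.final, q ∈ A.stQ)

/-! ### Classes of constraints -/

def GAtom.IsEqNeq {Q : Type} : GAtom Q → Prop
  | .eq _ _ => True
  | .neq _ _ => True
  | .cnt _ _ => False
  | .cls _ _ => False

/-- All coefficients and the constant have the same sign. -/
def sameSign (l : List ℤ) (a : ℤ) : Prop :=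
  ((∀ c ∈ l, 0 ≤ c) ∧ 0 ≤ a) ∨ ((∀ c ∈ l, c ≤ 0) ∧ a ≤ 0)

/-- eq/neq atoms and *natural* linear inequalities. -/
def GAtom.IsNat {Q : Type} : GAtom Q → Prop
  | .eq _ _ => True
  | .neq _ _ => True
  | .cnt l a => sameSign (l.map Prod.fst) a
  | .cls l a => sameSign (l.map Prod.fst) a

/-- eq/neq atoms and natural linear inequalities over the `|q|` only. -/
def GAtom.IsNatCnt {Q : Type} : GAtom Q → Prop
  | .eq _ _ => True
  | .neq _ _ => True
  | .cnt l a => sameSign (l.map Prod.fst) a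
  | .cls _ _ => False

def GC.AtomsAre {Q : Type} (P : GAtom Q → Prop) : GC Q → Prop
  | .tt => True
  | .ff => True
  | .atom a => P a
  | .and c d => GC.AtomsAre P c ∧ GC.AtomsAre P d
  | .or c d => GC.AtomsAre P c ∧ GC.AtomsAre P d
  | .not c => GC.AtomsAre P c

/-- Positive conjunctive constraint: a conjunction of atoms. -/
def GC.IsConjAtoms {Q : Type} : GC Q → Prop
  | .tt => True
  | .ff => False
  | .atom _ => True
  | .and c d => GC.IsConjAtoms c ∧ GC.IsConjAtoms d
  | .or _ _ => False
  | .not _ => False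

/-- A literal: an atom (with natural arithmetic atoms) or the negation of an
eq/neq atom. -/
def GC.IsLit {Q : Type} : GC Q → Prop
  | .atom a => GAtom.IsNat a
  | .not (.atom (.eq _ _)) => True
  | .not (.atom (.neq _ _)) => True
  | _ => False

def GC.IsConjLit {Q : Type} : GC Q → Prop
  | .and c d => GC.IsConjLit c ∧ GC.IsConjLit d
  | c => GC.IsLit c

def GC.IsDNF {Q : Type} : GC Q → Prop
  | .or c d => GC.IsDNF c ∧ GC.IsDNF d
  | c => GC.IsConjLit c

/-- Normalized constraint: `true`, `false`, or a disjunction of conjunctions of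
literals in which all arithmetic literals are positive. -/
def GC.Normalized {Q : Type} (c : GC Q) : Prop :=
  c = GC.tt ∨ c = GC.ff ∨ GC.IsDNF c

/-- No reflexive disequality constraints (the TAGED restriction). -/
def GC.NoReflNeq {Q : Type} : GC Q → Prop :=
  GC.AtomsAre (fun a => match a with
    | .neq q q' => q ≠ q'
    | _ => True)

def conjList {Q : Type} : List (GC Q) → GC Q
  | [] => GC.tt
  | [c] => c
  | c :: cs => GC.and c (conjList cs)

def disjList {Q : Type} : List (GC Q) → GC Q
  | [] => GC.ff
  | [c] => c
  | c :: cs => GC.or c (disjList cs)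

/-- No local constraints between brothers. -/
def TABG.NoBrother {F Q : Type} (A : TABG F Q) : Prop :=
  ∀ ρ ∈ A.rules, ρ.bcEq = [] ∧ ρ.bcNeq = []

/-- A TAG: empty equational theory and no brother constraints. -/
def TABG.IsTAG {F Q : Type} (A : TABG F Q) : Prop := A.eqs = [] ∧ A.NoBrother

/-- A plain tree automaton: a TAG with trivial global constraint. -/
def TABG.IsTA {F Q : Type} (A : TABG F Q) : Prop := A.IsTAG ∧ A.gc = GC.tt

/-! ### Synonym states -/

section Syn

variable {F Q : Type} [DecidableEq Q]

/-- Possible replacements of a state occurrence: `q̄` may stay or become `q̂`. -/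
def replS (qb qh q : Q) : List Q := if q = qb then [qb, qh] else [q]

/-- Replacement of every occurrence of `|q̄|` (resp. `‖q̄‖`) by `|q̄| + |q̂|`
(resp. `‖q̄‖ + ‖q̂‖`) in a linear expression. -/
def linRepl (qb qh : Q) (l : List (ℤ × Q)) : List (ℤ × Q) :=
  l.flatMap (fun cq => (replS qb qh cq.2).map (fun q' => (cq.1, q')))

/-- Literal transformation on positive atoms. -/
def synAtom (qb qh : Q) : GAtom Q → GC Q
  | .eq q1 q2 => conjList ((replS qb qh q1).flatMap (fun a =>
      (replS qb qh q2).map (fun b => GC.atom (GAtom.eq a b))))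
  | .neq q1 q2 => conjList ((replS qb qh q1).flatMap (fun a =>
      (replS qb qh q2).map (fun b => GC.atom (GAtom.neq a b))))
  | .cnt l a => GC.atom (GAtom.cnt (linRepl qb qh l) a)
  | .cls l a => GC.atom (GAtom.cls (linRepl qb qh l) a)

/-- The literal transformation `Ĉ` of (a normalized) constraint, for `q̄ ↝ q̂`. -/
def GC.synTrans (qb qh : Q) : GC Q → GC Q
  | .tt => .tt
  | .ff => .ff
  | .atom a => synAtom qb qh a
  | .not (.atom (.eq q1 q2)) => disjList ((replS qb qh q1).flatMap (fun a =>
      (replS qb qh q2).map (fun b => GC.not (GC.atom (GAtom.eq a b)))))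
  | .not (.atom (.neq q1 q2)) => disjList ((replS qb qh q1).flatMap (fun a =>
      (replS qb qh q2).map (fun b => GC.not (GC.atom (GAtom.neq a b)))))
  | .not c => GC.not (GC.synTrans qb qh c)
  | .and c d => GC.and (GC.synTrans qb qh c) (GC.synTrans qb qh d)
  | .or c d => GC.or (GC.synTrans qb qh c) (GC.synTrans qb qh d)

/-- All rules obtained from `ρ` by all possible replacements of occurrences of
`q̄` by `q̂`. -/
def Rule.synVars (qb qh : Q) (ρ : Rule F Q) : List (Rule F Q) :=
  (ρ.args.mapM (replS qb qh)).flatMap (fun args' =>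
    (replS qb qh ρ.res).map (fun res' =>
      { sym := ρ.sym, args := args', bcEq := ρ.bcEq, bcNeq := ρ.bcNeq, res := res' }))

/-- `F_{q̄↝q̂}` on the list of final states. -/
def finSyn (qb qh : Q) (l : List Q) : List Q := if qb ∈ l then qh :: l else l

/-- The constraint `‖q‖ = k`. -/
def clsEqC (q : Q) (k : ℤ) : GC Q :=
  GC.and (GC.atom (GAtom.cls [(1, q)] k)) (GC.atom (GAtom.cls [(-1, q)] (-k)))

/-- The automaton `A_{q̄↝q̂}`. -/
def TABG.synonym (A : TABG F Q) (qb qh : Q) : TABG F Q :=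
  { arity := A.arity
    stQ := insert qh A.stQ
    rules := A.rules.flatMap (Rule.synVars qb qh)
    final := finSyn qb qh A.final
    eqs := A.eqs
    gc := GC.and
      (GC.or (GC.and (clsEqC qb 0) (clsEqC qh 0))
             (GC.and (clsEqC qh 1) (GC.atom (GAtom.neq qb qh))))
      (GC.synTrans qb qh A.gc) }

end Syn

/-! ### Removal of the counting constraints `|q|` : the automaton `A_¬ℕ` -/

def GC.cntAtoms {Q : Type} : GC Q → List (List (ℤ × Q) × ℤ)
  | .atom (.cnt l a) => [(l, a)]
  | .and c d => GC.cntAtoms c ++ GC.cntAtoms d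
  | .or c d => GC.cntAtoms c ++ GC.cntAtoms d
  | .not c => GC.cntAtoms c
  | _ => []

def GC.eqAtoms {Q : Type} : GC Q → List (Q × Q)
  | .atom (.eq q q') => [(q, q')]
  | .and c d => GC.eqAtoms c ++ GC.eqAtoms d
  | .or c d => GC.eqAtoms c ++ GC.eqAtoms d
  | .not c => GC.eqAtoms c
  | _ => []

def GC.neqAtoms {Q : Type} : GC Q → List (Q × Q)
  | .atom (.neq q q') => [(q, q')]
  | .and c d => GC.neqAtoms c ++ GC.neqAtoms d
  | .or c d => GC.neqAtoms c ++ GC.neqAtoms d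
  | .not c => GC.neqAtoms c
  | _ => []

/-- `max_A` : one plus the maximal constant occurring in the counting literals. -/
def GC.maxConst {Q : Type} (c : GC Q) : ℕ :=
  1 + ((c.cntAtoms.map (fun la => la.2.natAbs)).foldr max 0)

/-- Truncated sum of two mappings `Q → {0,…,m}`. -/
def msumF {Q : Type} {m : ℕ} (M1 M2 : Q → Fin (m + 1)) : Q → Fin (m + 1) :=
  fun q => ⟨min ((M1 q : ℕ) + (M2 q : ℕ)) m, Nat.lt_succ_of_le (Nat.min_le_right _ _)⟩

/-- The mapping `M_q`. -/
def unitMap {Q : Type} [DecidableEq Q] (m : ℕ) (q : Q) : Q → Fin (m + 1) :=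
  fun q' => if q' = q then ⟨min 1 m, Nat.lt_succ_of_le (Nat.min_le_right _ _)⟩
            else ⟨0, Nat.succ_pos m⟩

/-- Value of a linear expression under a mapping. -/
def lvalF {Q : Type} {m : ℕ} (M : Q → Fin (m + 1)) (l : List (ℤ × Q)) : ℤ :=
  (l.map (fun cq => cq.1 * ((M cq.2 : ℕ) : ℤ))).sum

/-- All variants of a rule, decorated with occurrence-counting mappings. -/
noncomputable def Rule.notNVars {F Q : Type} [Fintype Q] [DecidableEq Q] (m : ℕ) (ρ : Rule F Q) :
    List (Rule F (Q × (Q → Fin (m + 1)))) :=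
  ((ρ.args.mapM (fun q =>
      ((Finset.univ : Finset (Q → Fin (m + 1))).toList).map (fun M => (q, M))))).map
    (fun args' =>
      { sym := ρ.sym, args := args', bcEq := ρ.bcEq, bcNeq := ρ.bcNeq,
        res := (ρ.res, (args'.map Prod.snd).foldr msumF (unitMap m ρ.res)) })

/-- The automaton `A_¬ℕ`. -/
noncomputable def TABG.notN {F Q : Type} [Fintype Q] [DecidableEq Q] (A : TABG F Q) :
    TABG F (Q × (Q → Fin (A.gc.maxConst + 1))) :=
  { arity := A.arity
    stQ := A.stQ ×ˢ (Finset.univ : Finset (Q → Fin (A.gc.maxConst + 1)))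
    rules := A.rules.flatMap (Rule.notNVars A.gc.maxConst)
    final := (A.final.flatMap (fun q =>
        ((Finset.univ : Finset (Q → Fin (A.gc.maxConst + 1))).toList).map
          (fun M => (q, M)))).filter
        (fun qM => decide (∀ la ∈ A.gc.cntAtoms, la.2 ≤ lvalF qM.2 la.1))
    eqs := A.eqs
    gc := GC.and
      (conjList ((A.gc.eqAtoms).flatMap (fun qq =>
        ((Finset.univ : Finset (Q → Fin (A.gc.maxConst + 1))).toList).flatMap (fun M1 =>
          ((Finset.univ : Finset (Q → Fin (A.gc.maxConst + 1))).toList).map (fun M2 =>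
            GC.atom (GAtom.eq (qq.1, M1) (qq.2, M2)))))))
      (conjList ((A.gc.neqAtoms).flatMap (fun qq =>
        ((Finset.univ : Finset (Q → Fin (A.gc.maxConst + 1))).toList).flatMap (fun M1 =>
          ((Finset.univ : Finset (Q → Fin (A.gc.maxConst + 1))).toList).map (fun M2 =>
            GC.atom (GAtom.neq (qq.1, M1) (qq.2, M2))))))) }

/-! ### Global pumpings -/

section Pump

variable {F Q : Type}

/-- `H_i` : positions of subruns of positive height equal to `i`. -/
def Hset (r : Run F Q) (i : ℕ) : Set (List ℕ) :=
  {p | ∃ s, RTerm.SubAt r p s ∧ 0 < RTerm.height s ∧ RTerm.height s = i}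

/-- `Ȟ_i` : positions `p.j` of subruns of positive height `< i` whose parent has
height `> i`. -/
def Hcheck (r : Run F Q) (i : ℕ) : Set (List ℕ) :=
  {p' | ∃ (p : List ℕ) (j : ℕ) (s s' : Run F Q), p' = p ++ [j] ∧
    RTerm.SubAt r p s ∧ RTerm.SubAt r p' s' ∧
    0 < RTerm.height s' ∧ RTerm.height s' < i ∧ i < RTerm.height s}

/-- `H̊_i` : positions `p.j` of subruns of height `0` (with `0 < i`) whose parent
has height `> i`. -/
def Hring (r : Run F Q) (i : ℕ) : Set (List ℕ) :=
  {p' | ∃ (p : List ℕ) (j : ℕ) (s s' : Run F Q), p' = p ++ [j] ∧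
    RTerm.SubAt r p s ∧ RTerm.SubAt r p' s' ∧
    RTerm.height s' = 0 ∧ 0 < i ∧ i < RTerm.height s}

def Dom (r : Run F Q) (i : ℕ) : Set (List ℕ) := Hset r i ∪ Hcheck r i ∪ Hring r i

/-- A pump-injection `I : (H_i ∪ Ȟ_i ∪ H̊_i) → (H_j ∪ Ȟ_j ∪ H̊_j)`. -/
structure PumpInj (E : List (Pat F × Pat F)) (r : Run F Q) (i j : ℕ)
    (I : List ℕ → List ℕ) : Prop where
  inj : Set.InjOn I (Dom r i)
  mapsH : Set.MapsTo I (Hset r i) (Hset r j)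
  mapsHc : Set.MapsTo I (Hcheck r i) (Hcheck r j)
  mapsHr : Set.MapsTo I (Hring r i) (Hring r j)
  idRing : ∀ p ∈ Hring r i, I p = p
  stPres : ∀ p ∈ Dom r i, ∀ s s', RTerm.SubAt r p s → RTerm.SubAt r (I p) s' →
    Run.state s = Run.state s'
  eqPres : ∀ p1 p2, p1 ∈ Dom r i → p2 ∈ Dom r i →
    ∀ s1 s2 s1' s2', RTerm.SubAt r p1 s1 → RTerm.SubAt r p2 s2 →
      RTerm.SubAt r (I p1) s1' → RTerm.SubAt r (I p2) s2' →
      (EqE E (Run.term s1) (Run.term s2) ↔ EqE E (Run.term s1') (Run.term s2'))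

/-- Simultaneous replacement at all positions of `D` (which are assumed to be
pairwise parallel): at a position of `D` the subtree is replaced by a tree
allowed by `ρ`, elsewhere the tree is kept. -/
inductive MultiRepl {β : Type} (D : Set (List ℕ)) (ρ : List ℕ → RTerm β → Prop) :
    List ℕ → RTerm β → RTerm β → Prop
  | here {p : List ℕ} {t t' : RTerm β} : p ∈ D → ρ p t' → MultiRepl D ρ p t t'
  | node {p : List ℕ} {f : β} {ts ts' : List (RTerm β)} :
      p ∉ D → ts.length = ts'.length →
      (∀ k u u', ts[k]? = some u → ts'[k]? = some u' →
        MultiRepl D ρ (p ++ [k]) u u') →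
      MultiRepl D ρ p (RTerm.node f ts) (RTerm.node f ts')

/-- `r'` is the global pumping on `r` with indexes `i,j` and injection `I`. -/
def IsGlobalPumpingWith (E : List (Pat F × Pat F)) (r : Run F Q) (i j : ℕ)
    (I : List ℕ → List ℕ) (r' : Run F Q) : Prop :=
  PumpInj E r i j I ∧
  MultiRepl (Dom r i) (fun p s => RTerm.SubAt r (I p) s) [] r r'

/-- The `=E`-classes of the subterms at positions of `P`. -/
def classesAt (E : List (Pat F × Pat F)) (r : Run F Q) (P : Set (List ℕ)) :
    Set (Set (RTerm F)) :=
  classesOf E {t | ∃ p ∈ P, ∃ s, RTerm.SubAt r p s ∧ Run.term s = t}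

/-- The tuple `r_{t,P}` of a class `C`, as a function on states. -/
noncomputable def tupleAt (r : Run F Q) (P : Set (List ℕ)) (C : Set (RTerm F))
    (q : Q) : ℕ :=
  {p | p ∈ P ∧ ∃ s, RTerm.SubAt r p s ∧ Run.state s = q ∧ Run.term s ∈ C}.ncard

/-- The multiset ordering `r_P ≤ r_{P'}` : an injection on classes which is
dominating on the associated tuples. -/
def MsetLE (E : List (Pat F × Pat F)) (r : Run F Q) (P P' : Set (List ℕ)) : Prop :=
  ∃ φ : Set (RTerm F) → Set (RTerm F),
    Set.InjOn φ (classesAt E r P) ∧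
    Set.MapsTo φ (classesAt E r P) (classesAt E r P') ∧
    ∀ C ∈ classesAt E r P, ∀ q, tupleAt r P C q ≤ tupleAt r P' (φ C) q

end Pump

/-! ### Multisets of tuples of naturals (for the well quasi-ordering) -/

def TupLE {n : ℕ} (x y : Fin n → ℕ) : Prop := ∀ k, x k ≤ y k

/-- Multiset ordering: an injection mapping each element to a dominating one. -/
def MLE {n : ℕ} (S T : Multiset (Fin n → ℕ)) : Prop :=
  ∃ T' : Multiset (Fin n → ℕ), T' ≤ T ∧ Multiset.Rel TupLE S T'

def msumT {n : ℕ} (S : Multiset (Fin n → ℕ)) : ℕ :=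
  (S.map (fun x => ∑ k, x k)).sum

/-! ### Hedge automata with global constraints, and currying -/

/-- A finite word automaton over the alphabet `Q` (auxiliary states are naturals). -/
structure WordAut (Q : Type) where
  stS : Finset ℕ
  init : ℕ
  final : List ℕ
  trans : List (ℕ × Q × ℕ)

inductive WAccepts {Q : Type} (W : WordAut Q) : ℕ → List Q → Prop
  | nil {s : ℕ} : s ∈ W.final → WAccepts W s []
  | cons {s : ℕ} {q : Q} {s' : ℕ} {w : List Q} :
      (s, q, s') ∈ W.trans → WAccepts W s' w → WAccepts W s (q :: w)

def WordAut.Lang {Q : Type} (W : WordAut Q) (w : List Q) : Prop := WAccepts W W.init w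

/-- Transition rule `a(L) → q` of a hedge automaton. -/
structure HRule (F Q : Type) where
  sym : F
  wa : WordAut Q
  res : Q

/-- Hedge automaton with global constraints, over unranked ordered terms. -/
structure HAG (F Q : Type) where
  stQ : Finset Q
  rules : List (HRule F Q)
  final : List Q
  gc : GC Q

abbrev HRun (F Q : Type) := RTerm (HRule F Q)

def HRun.state {F Q : Type} (r : HRun F Q) : Q := (RTerm.rootLabel r).res
def HRun.term {F Q : Type} (r : HRun F Q) : RTerm F := r.map HRule.sym

inductive IsHRun {F Q : Type} (Δ : List (HRule F Q)) : HRun F Q → Prop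
  | node {ρ : HRule F Q} {rs : List (HRun F Q)} :
      ρ ∈ Δ → ρ.wa.Lang (rs.map HRun.state) →
      (∀ r ∈ rs, IsHRun Δ r) → IsHRun Δ (RTerm.node ρ rs)

def HAG.Lang {F Q : Type} (A : HAG F Q) : Set (RTerm F) :=
  {t | ∃ r : HRun F Q, IsHRun A.rules r ∧
        satGC ([] : List (Pat F × Pat F)) HRule.res HRule.sym r A.gc ∧
        HRun.state r ∈ A.final ∧ HRun.term r = t}

/-- The ranked signature `Σ_@` : symbols of `Σ` become constants, `none` is the
binary symbol `@`. -/
def arAt {F : Type} : Option F → ℕ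
  | none => 2
  | some _ => 0

/-- The `curry` encoding of unranked terms into ranked terms over `Σ_@`. -/
inductive Curried {F : Type} : RTerm F → RTerm (Option F) → Prop
  | base {a : F} : Curried (RTerm.node a []) (RTerm.node (some a) [])
  | step {a : F} {ts : List (RTerm F)} {t : RTerm F} {u v : RTerm (Option F)} :
      Curried (RTerm.node a ts) u → Curried t v →
      Curried (RTerm.node a (ts ++ [t])) (RTerm.node none [u, v])

/-! ### Concrete signatures and languages -/

/-- The signature `{a:0, s:1, f:2}` (resp. `{a:0, g:1, f:2}`): symbol `0` has
arity 0, symbol `1` arity 1, symbol `2` arity 2. -/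
def ar3 : Fin 3 → ℕ := ![0, 1, 2]

/-- `iter1 n` is `s^n(a)` (resp. `g^n(a)`). -/
def iter1 : ℕ → RTerm (Fin 3)
  | 0 => RTerm.node 0 []
  | n + 1 => RTerm.node 1 [iter1 n]

/-- `chain [n1,…,nk] = f(s^{n1}(a), f(s^{n2}(a), …, f(s^{nk}(a), a)…))`. -/
def chain : List ℕ → RTerm (Fin 3)
  | [] => RTerm.node 0 []
  | n :: ns => RTerm.node 2 [iter1 n, chain ns]

/-- The language of chains with pairwise distinct exponents. -/
def LKey : Set (RTerm (Fin 3)) := {t | ∃ ns : List ℕ, ns.Nodup ∧ t = chain ns}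

/-- `bracket [n1,…,nk] = f(g^{n1}(a), f(…, f(g^{n_{k−1}}(a), g^{n_k}(a))…))`. -/
def bracket : List ℕ → RTerm (Fin 3)
  | [] => RTerm.node 0 []
  | [n] => iter1 n
  | n :: ns => RTerm.node 2 [iter1 n, bracket ns]

/-- Every entry has exactly one partner with the same value. -/
def ExactlyOnePartner (ns : List ℕ) : Prop :=
  ∀ i, i < ns.length → ∃! j, j < ns.length ∧ j ≠ i ∧ ns[i]? = ns[j]?

def LDup : Set (RTerm (Fin 3)) :=
  {t | ∃ ns : List ℕ, ns ≠ [] ∧ ExactlyOnePartner ns ∧ t = bracket ns}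

/-! ### Concrete, codable presentations of automata -/

abbrev RuleData := ℕ × List ℕ × List (ℕ × ℕ) × List (ℕ × ℕ) × ℕ
abbrev PatAtomData := ℕ ⊕ ℕ
abbrev FlatSideData := PatAtomData ⊕ (ℕ × List PatAtomData)
abbrev LinData := List (ℤ × ℕ) × ℤ
abbrev GAtomData := (ℕ × ℕ) ⊕ ((ℕ × ℕ) ⊕ (LinData ⊕ LinData))
abbrev GCNodeData := GAtomData ⊕ (ℕ × ℕ × ℕ)
abbrev TABGData :=
  List (ℕ × ℕ) × List RuleData × List ℕ × List (FlatSideData × FlatSideData) ×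
    List GCNodeData

def decodePatAtom : PatAtomData → Pat ℕ
  | Sum.inl v => Pat.var v
  | Sum.inr c => Pat.node c []

def decodeSide : FlatSideData → Pat ℕ
  | Sum.inl a => decodePatAtom a
  | Sum.inr (f, l) => Pat.node f (l.map decodePatAtom)

def decodeGAtom : GAtomData → GAtom ℕ
  | Sum.inl (q, q') => GAtom.eq q q'
  | Sum.inr (Sum.inl (q, q')) => GAtom.neq q q'
  | Sum.inr (Sum.inr (Sum.inl (l, a))) => GAtom.cnt l a
  | Sum.inr (Sum.inr (Sum.inr (l, a))) => GAtom.cls l a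

def decodeGC (nodes : List GCNodeData) : ℕ → ℕ → GC ℕ
  | 0, _ => GC.tt
  | fuel + 1, i =>
    match nodes[i]? with
    | some (Sum.inl a) => GC.atom (decodeGAtom a)
    | some (Sum.inr (op, l, rr)) =>
      if op = 0 then GC.tt
      else if op = 1 then GC.ff
      else if op = 2 then GC.and (decodeGC nodes fuel l) (decodeGC nodes fuel rr)
      else if op = 3 then GC.or (decodeGC nodes fuel l) (decodeGC nodes fuel rr)
      else GC.not (decodeGC nodes fuel l)
    | none => GC.tt

def decodeRule : RuleData → Rule ℕ ℕ
  | (f, args, be, bn, q) => ⟨f, args, be, bn, q⟩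

def decodeArity (sig : List (ℕ × ℕ)) : ℕ → ℕ :=
  fun f => (((sig.find? (fun p => p.1 == f)).map Prod.snd).getD 0)

def dataStates (rules : List RuleData) (final : List ℕ) : Finset ℕ :=
  (rules.flatMap (fun r => r.2.2.2.2 :: r.2.1)).toFinset ∪ final.toFinset

/-- Decoding of a full TABG with arbitrary Boolean global constraint. -/
def decodeTABG (d : TABGData) : TABG ℕ ℕ :=
  { arity := decodeArity d.1
    stQ := dataStates d.2.1 d.2.2.1
    rules := d.2.1.map decodeRule
    final := d.2.2.1
    eqs := d.2.2.2.1.map (fun e => (decodeSide e.1, decodeSide e.2))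
    gc := decodeGC d.2.2.2.2 (d.2.2.2.2).length 0 }

/-- Data for a `TAG^∧[≈]` : signature, rules (no brother constraints), final
states, and a conjunction of equational atoms `q ≈ q'`. -/
abbrev TAGCEData := List (ℕ × ℕ) × List (ℕ × List ℕ × ℕ) × List ℕ × List (ℕ × ℕ)

def decodeTAGCE (d : TAGCEData) : TABG ℕ ℕ :=
  { arity := decodeArity d.1
    stQ := (d.2.1.flatMap (fun r => r.2.2 :: r.2.1)).toFinset ∪ d.2.2.1.toFinset
    rules := d.2.1.map (fun r => ⟨r.1, r.2.1, [], [], r.2.2⟩)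
    final := d.2.2.1
    eqs := []
    gc := conjList (d.2.2.2.map (fun qq => GC.atom (GAtom.eq qq.1 qq.2))) }

/-- Data for a `TAG^∧[≈, |.|_ℤ]` : as above plus a conjunction of integer linear
inequalities. -/
abbrev TAGCZData :=
  List (ℕ × ℕ) × List (ℕ × List ℕ × ℕ) × List ℕ × List (ℕ × ℕ) × List LinData

def decodeTAGCZ (d : TAGCZData) : TABG ℕ ℕ :=
  { arity := decodeArity d.1
    stQ := (d.2.1.flatMap (fun r => r.2.2 :: r.2.1)).toFinset ∪ d.2.2.1.toFinset
    rules := d.2.1.map (fun r => ⟨r.1, r.2.1, [], [], r.2.2⟩)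
    final := d.2.2.1
    eqs := []
    gc := conjList
      (d.2.2.2.1.map (fun qq => GC.atom (GAtom.eq qq.1 qq.2)) ++
       d.2.2.2.2.map (fun la => GC.atom (GAtom.cnt la.1 la.2))) }

/-- A tree language over the ranked signature `ar` is regular if it is the
language of a plain tree automaton. -/
def IsRegular (ar : ℕ → ℕ) (L : Set (RTerm ℕ)) : Prop :=
  ∃ (n : ℕ) (B : TABG ℕ (Fin n)), B.arity = ar ∧ B.WF ∧ B.IsTA ∧ B.Lang = L

/-! ### Automata classes as predicates -/

/-- A TAGED: a TAG whose constraint is a conjunction of atoms `q ≈ q'`, `q ≉ q'`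
without reflexive disequalities. -/
def TAGEDCond {F Q : Type} (A : TABG F Q) : Prop :=
  A.IsTAG ∧ A.gc.IsConjAtoms ∧ A.gc.AtomsAre GAtom.IsEqNeq ∧ A.gc.NoReflNeq

/-- A positive conjunctive TAG with eq/neq atoms (`TAG^∧[≈,≉]`). -/
def TAGCwCond {F Q : Type} (A : TABG F Q) : Prop :=
  A.IsTAG ∧ A.gc.IsConjAtoms ∧ A.gc.AtomsAre GAtom.IsEqNeq

end TreeAut

/-!
Since `E` is flat, rewriting preserves heights, and a rewrite step at a node of height at least
one only involves that node and its children. Every node strictly above the positions of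
`H_i ∪ Ȟ_i ∪ H̊_i` has height greater than `i`, so at a prefix position the pumped term arises from
the original one by keeping the symbols above height `i` and replacing subterms of height at most
`i` by their partners under `I` (`LiftRel`). As `I` preserves `=_E` among these subterms and fixes
the constants of `H̊_i`, every rewrite step between original terms is simulated modulo `E` between
the pumped ones, so equalities are preserved. For disequalities the same argument runs from `r'`
back to `r` with bound `j`: the nodes above the replaced positions still have height greater than
`j` in `r'`.
-/

namespace TreeAut

theorem exists_getElem?_of_length_eq {α β : Type*} {l : List α} {l' : List β} {k : ℕ} {b : β}
    (hlen : l.length = l'.length) (h : l'[k]? = some b) : ∃ a, l[k]? = some a :=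
  ⟨l[k]'(hlen ▸ (List.getElem?_eq_some_iff.1 h).1), List.getElem?_eq_getElem _⟩

namespace RTerm

variable {F G : Type}

theorem induction_node {motive : RTerm F → Prop}
    (h : ∀ f ts, (∀ t ∈ ts, motive t) → motive (node f ts)) : ∀ t, motive t
  | .node f ts => h f ts fun u _ => induction_node h u
decreasing_by
  simp only [RTerm.node.sizeOf_spec]
  have := List.sizeOf_lt_of_mem ‹u ∈ ts›
  omega

theorem map_node (g : F → G) (f : F) (ts : List (RTerm F)) :
    (node f ts).map g = node (g f) (ts.map (map g)) := by
  rw [RTerm.map]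
  simp

theorem height_node_le_iff {f : F} {ts : List (RTerm F)} {n : ℕ} :
    (node f ts).height ≤ n ↔ ∀ u ∈ ts, u.height + 1 ≤ n := by
  induction ts with
  | nil => simp [height]
  | cons t ts ih => simp [height, ih]

theorem height_lt_of_mem {f : F} {ts : List (RTerm F)} {u : RTerm F} (h : u ∈ ts) :
    u.height < (node f ts).height :=
  height_node_le_iff.1 le_rfl u h

theorem height_eq_zero_iff {f : F} {ts : List (RTerm F)} : (node f ts).height = 0 ↔ ts = [] := by
  rw [← Nat.le_zero, height_node_le_iff, List.eq_nil_iff_forall_not_mem]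
  simp

theorem exists_mem_height_eq {f : F} {ts : List (RTerm F)} {n : ℕ}
    (h : (node f ts).height = n + 1) : ∃ u ∈ ts, u.height = n := by
  have hn : ¬ (node f ts).height ≤ n := by omega
  simp only [height_node_le_iff, not_forall, not_le] at hn
  obtain ⟨u, hu, hlt⟩ := hn
  exact ⟨u, hu, by have := height_lt_of_mem (f := f) hu; omega⟩

theorem height_node_congr {f : F} {g : G} {ts : List (RTerm F)} {ts' : List (RTerm G)}
    (h : ts.map height = ts'.map height) : (node f ts).height = (node g ts').height :=
  have key : ∀ {H : Type} (f : H) (ts : List (RTerm H)) (n : ℕ),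
      (node f ts).height ≤ n ↔ ∀ x ∈ ts.map height, x + 1 ≤ n := by
    simp [height_node_le_iff]
  eq_of_forall_ge_iff fun n => by rw [key, key, h]

theorem height_node_set {f : F} {ts : List (RTerm F)} {k : ℕ} {u u' : RTerm F}
    (hk : ts[k]? = some u) (hh : u'.height = u.height) :
    (node f (ts.set k u')).height = (node f ts).height := by
  obtain ⟨hlt, rfl⟩ := List.getElem?_eq_some_iff.1 hk
  refine height_node_congr ?_
  rw [List.map_set, hh, ← List.getElem_map height (h := by rw [List.length_map]; exact hlt),
    List.set_getElem_self]

theorem height_map (g : F → G) : ∀ t : RTerm F, (t.map g).height = t.height :=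
  induction_node fun f ts ih => by
    rw [map_node]
    exact height_node_congr (by rw [List.map_map]; exact List.map_congr_left ih)

theorem SubAt.eq_of_nil {t s : RTerm F} (h : SubAt t [] s) : s = t := by
  cases h
  rfl

theorem SubAt.unique {t s s' : RTerm F} {p : List ℕ} (h : SubAt t p s) (h' : SubAt t p s') :
    s = s' := by
  induction h with
  | refl => exact h'.eq_of_nil.symm
  | step hk _ ih =>
    cases h' with
    | step hk' h' =>
      cases hk.symm.trans hk'
      exact ih h'

theorem SubAt.append {t u s : RTerm F} {p q : List ℕ} (h : SubAt t p u) (h' : SubAt u q s) :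
    SubAt t (p ++ q) s := by
  induction h with
  | refl => exact h'
  | step hk _ ih => exact .step hk (ih h')

theorem SubAt.of_append {t s : RTerm F} {p q : List ℕ} (h : SubAt t (p ++ q) s) :
    ∃ u, SubAt t p u ∧ SubAt u q s := by
  induction p generalizing t with
  | nil => exact ⟨t, .refl t, h⟩
  | cons k p ih =>
    cases h with
    | step hk h =>
      obtain ⟨u, hu, hus⟩ := ih h
      exact ⟨u, .step hk hu, hus⟩

theorem SubAt.child {t u : RTerm F} {p : List ℕ} {f : F} {ts : List (RTerm F)} {k : ℕ}
    (h : SubAt t p (node f ts)) (hk : ts[k]? = some u) : SubAt t (p ++ [k]) u :=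
  h.append (.step hk (.refl u))

theorem SubAt.height_le {t s : RTerm F} {p : List ℕ} (h : SubAt t p s) : s.height ≤ t.height := by
  induction h with
  | refl => exact le_rfl
  | step hk _ ih => exact ih.trans (height_lt_of_mem (List.mem_of_getElem? hk)).le

theorem SubAt.height_le_of_prefix {t s u : RTerm F} {p q : List ℕ} (hq : q <+: p)
    (hs : SubAt t q s) (hu : SubAt t p u) : u.height ≤ s.height := by
  obtain ⟨rest, rfl⟩ := hq
  obtain ⟨s', hs', hrest⟩ := hu.of_append
  exact hs.unique hs' ▸ hrest.height_le

theorem SubAt.height_lt_of_prefix {t s u : RTerm F} {p q : List ℕ} (hq : q <+: p) (hne : q ≠ p)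
    (hs : SubAt t q s) (hu : SubAt t p u) : u.height < s.height := by
  obtain ⟨_ | ⟨k, rest⟩, rfl⟩ := hq
  · simp at hne
  obtain ⟨s', hs', hrest⟩ := hu.of_append
  cases hs.unique hs'
  cases hrest with
  | step hk hrest => exact hrest.height_le.trans_lt (height_lt_of_mem (List.mem_of_getElem? hk))

theorem ReplAt.subAt {t s t' : RTerm F} {p : List ℕ} (h : ReplAt t p s t') : SubAt t' p s := by
  induction h with
  | here => exact .refl _
  | step hk _ ih => exact .step (List.getElem?_set_self (List.getElem?_eq_some_iff.1 hk).1) ih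

theorem ReplAt.reverse {t v t' u : RTerm F} {p : List ℕ} (h : ReplAt t p v t')
    (hu : SubAt t p u) : ReplAt t' p u t := by
  induction h with
  | here => cases hu; exact .here _ _
  | step hk _ ih =>
    cases hu with
    | step hk' hu =>
      cases hk.symm.trans hk'
      obtain ⟨hlt, rfl⟩ := List.getElem?_eq_some_iff.1 hk
      simpa using ReplAt.step (List.getElem?_set_self hlt) (ih hu)

theorem ReplAt.height_eq {t v t' u : RTerm F} {p : List ℕ} (h : ReplAt t p v t')
    (hu : SubAt t p u) (hh : v.height = u.height) : t'.height = t.height := by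
  induction h with
  | here => cases hu; exact hh
  | step hk _ ih =>
    cases hu with
    | step hk' hu =>
      cases hk.symm.trans hk'
      exact height_node_set hk (ih hu hh)

end RTerm

namespace Pat

variable {F : Type}

@[simp] theorem subst_var (σ : ℕ → RTerm F) (v : ℕ) : (var v : Pat F).subst σ = σ v := by
  rw [subst]

@[simp] theorem subst_node (σ : ℕ → RTerm F) (f : F) (ps : List (Pat F)) :
    (node f ps).subst σ = RTerm.node f (ps.map (subst σ)) := by
  rw [subst]
  simp

theorem height_node_le_iff {f : F} {ps : List (Pat F)} {n : ℕ} :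
    (node f ps).height ≤ n ↔ ∀ p ∈ ps, p.height + 1 ≤ n := by
  induction ps with
  | nil => simp [height]
  | cons p ps ih => simp [height, ih]

theorem hasVar_var_iff {v w : ℕ} : HasVar v (var w : Pat F) ↔ v = w :=
  ⟨fun h => by cases h; rfl, fun h => h ▸ .var⟩

theorem hasVar_node_iff {v : ℕ} {f : F} {ps : List (Pat F)} :
    HasVar v (node f ps) ↔ ∃ p ∈ ps, HasVar v p :=
  ⟨fun h => by cases h with | node hp hv => exact ⟨_, hp, hv⟩,
    fun ⟨_, hp, hv⟩ => .node hp hv⟩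

theorem height_eq_zero_of_mem {f : F} {ps : List (Pat F)} {q : Pat F}
    (h : (node f ps).height ≤ 1) (hq : q ∈ ps) : q.height = 0 := by
  have := height_node_le_iff.1 h q hq
  omega

theorem eq_var_or_const_of_height_eq_zero {p : Pat F} (h : p.height = 0) :
    (∃ v, p = var v) ∨ ∃ c, p = node c [] := by
  rcases p with v | ⟨c, ps⟩
  · exact .inl ⟨v, rfl⟩
  · rw [← Nat.le_zero, height_node_le_iff] at h
    exact .inr ⟨c, by simpa [List.eq_nil_iff_forall_not_mem] using h⟩

theorem eq_var_of_hasVar {p : Pat F} {v : ℕ} (h : p.height = 0) (hv : HasVar v p) :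
    p = var v := by
  rcases eq_var_or_const_of_height_eq_zero h with ⟨w, rfl⟩ | ⟨c, rfl⟩
  · rw [hasVar_var_iff.1 hv]
  · simp [hasVar_node_iff] at hv

theorem height_subst_add_le_iff {p : Pat F} (h : p.height = 0) (σ : ℕ → RTerm F) {k n : ℕ} :
    (p.subst σ).height + k ≤ n ↔ k ≤ n ∧ ∀ v, HasVar v p → (σ v).height + k ≤ n := by
  rcases eq_var_or_const_of_height_eq_zero h with ⟨w, rfl⟩ | ⟨c, rfl⟩
  · simp only [subst_var, hasVar_var_iff, forall_eq]
    omega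
  · simp [hasVar_node_iff, RTerm.height]

theorem height_subst_le_iff {p : Pat F} (h : p.height ≤ 1) (σ : ℕ → RTerm F) {n : ℕ} :
    (p.subst σ).height ≤ n ↔ p.height ≤ n ∧ ∀ v, HasVar v p → (σ v).height + p.height ≤ n := by
  rcases Nat.le_one_iff_eq_zero_or_eq_one.1 h with h0 | h1
  · simpa [h0] using height_subst_add_le_iff h0 σ (k := 0)
  rcases p with v | ⟨f, ps⟩
  · simp [height] at h1
  have hps : ∀ q ∈ ps, q.height = 0 := fun q => height_eq_zero_of_mem h
  have hne : ps ≠ [] := by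
    rintro rfl
    simp [height] at h1
  obtain ⟨q₀, hq₀⟩ := List.exists_mem_of_ne_nil ps hne
  simp only [h1, subst_node, RTerm.height_node_le_iff, List.forall_mem_map, hasVar_node_iff]
  constructor
  · intro hle
    exact ⟨((height_subst_add_le_iff (hps q₀ hq₀) σ).1 (hle q₀ hq₀)).1,
      fun v ⟨q, hq, hv⟩ => ((height_subst_add_le_iff (hps q hq) σ).1 (hle q hq)).2 v hv⟩
  · rintro ⟨hn, hv⟩ q hq
    exact (height_subst_add_le_iff (hps q hq) σ).2 ⟨hn, fun v hvq => hv v ⟨q, hq, hvq⟩⟩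

end Pat

section Rewriting

variable {F : Type} {ar : F → ℕ} {E : List (Pat F × Pat F)}

theorem IsFlatEq.swap {l r : Pat F} (h : IsFlatEq ar (l, r)) : IsFlatEq ar (r, l) := by
  obtain ⟨hl, hr, hh, h1, hv⟩ := h
  exact ⟨hr, hl, hh.symm, hh ▸ h1, fun v => (hv v).symm⟩

theorem IsFlatEq.height_subst {l r : Pat F} (h : IsFlatEq ar (l, r)) (σ : ℕ → RTerm F) :
    (l.subst σ).height = (r.subst σ).height := by
  obtain ⟨-, -, hh, h1, hv⟩ := h
  refine eq_of_forall_ge_iff fun n => ?_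
  rw [Pat.height_subst_le_iff h1, Pat.height_subst_le_iff (hh ▸ h1), hh]
  simp only [hv]

theorem isFlatEq_of_mem (hE : ∀ e ∈ E, IsFlatEq ar e) {l r : Pat F}
    (h : (l, r) ∈ E ∨ (r, l) ∈ E) : IsFlatEq ar (l, r) :=
  h.elim (hE _) fun h => (hE _ h).swap

theorem Rew.symm {s t : RTerm F} (h : Rew E s t) : Rew E t s := by
  obtain ⟨l, r, hm, σ, p, hs, hr⟩ := h
  exact ⟨r, l, hm.symm, σ, p, hr.subAt, hr.reverse hs⟩

theorem Rew.node_set {f : F} {ts : List (RTerm F)} {k : ℕ} {u w : RTerm F}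
    (hk : ts[k]? = some u) (h : Rew E u w) : Rew E (.node f ts) (.node f (ts.set k w)) := by
  obtain ⟨l, r, hm, σ, p, hs, hr⟩ := h
  exact ⟨l, r, hm, σ, k :: p, .step hk hs, .step hk hr⟩

theorem Rew.root_or_child {f : F} {ts : List (RTerm F)} {t : RTerm F}
    (h : Rew E (.node f ts) t) :
    (∃ l r : Pat F, ((l, r) ∈ E ∨ (r, l) ∈ E) ∧
      ∃ σ, RTerm.node f ts = l.subst σ ∧ t = r.subst σ) ∨
    ∃ k u w, ts[k]? = some u ∧ Rew E u w ∧ t = .node f (ts.set k w) := by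
  obtain ⟨l, r, hm, σ, _ | ⟨k, p⟩, hs, hr⟩ := h
  · cases hr
    exact .inl ⟨l, r, hm, σ, hs.eq_of_nil.symm, rfl⟩
  · cases hs with
    | step hk hs =>
      cases hr with
      | step hk' hr =>
        cases hk.symm.trans hk'
        exact .inr ⟨k, _, _, hk, ⟨l, r, hm, σ, p, hs, hr⟩, rfl⟩

theorem Rew.height_eq (hE : ∀ e ∈ E, IsFlatEq ar e) {s t : RTerm F} (h : Rew E s t) :
    s.height = t.height := by
  obtain ⟨l, r, hm, σ, p, hs, hr⟩ := h
  exact (hr.height_eq hs ((isFlatEq_of_mem hE hm).height_subst σ).symm).symm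

theorem EqE.refl (s : RTerm F) : EqE E s s := Relation.ReflTransGen.refl

theorem EqE.of_rew {s t : RTerm F} (h : Rew E s t) : EqE E s t := Relation.ReflTransGen.single h

theorem EqE.trans {s t u : RTerm F} (h : EqE E s t) (h' : EqE E t u) : EqE E s u :=
  Relation.ReflTransGen.trans h h'

theorem EqE.symm {s t : RTerm F} (h : EqE E s t) : EqE E t s := by
  induction h with
  | refl => exact .refl _
  | tail _ hr ih => exact (of_rew hr.symm).trans ih

theorem EqE.height_eq (hE : ∀ e ∈ E, IsFlatEq ar e) {s t : RTerm F} (h : EqE E s t) :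
    s.height = t.height := by
  induction h with
  | refl => rfl
  | tail _ hr ih => exact ih.trans (hr.height_eq hE)

theorem EqE.node_set {f : F} {ts : List (RTerm F)} {k : ℕ} {u w : RTerm F}
    (hk : ts[k]? = some u) (h : EqE E u w) : EqE E (.node f ts) (.node f (ts.set k w)) := by
  induction h with
  | refl =>
    obtain ⟨hlt, rfl⟩ := List.getElem?_eq_some_iff.1 hk
    rw [List.set_getElem_self]
    exact .refl _
  | tail _ hr ih =>
    have := hr.node_set (f := f) (List.getElem?_set_self (List.getElem?_eq_some_iff.1 hk).1)
    rw [List.set_set] at this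
    exact ih.tail this

theorem EqE.node_congr {f : F} {ts ts' : List (RTerm F)} (hlen : ts.length = ts'.length)
    (h : ∀ (k : ℕ) u u', ts[k]? = some u → ts'[k]? = some u' → EqE E u u') :
    EqE E (.node f ts) (.node f ts') := by
  suffices ∀ L, EqE E (.node f (L ++ ts)) (.node f (L ++ ts')) by simpa using this []
  induction ts generalizing ts' with
  | nil =>
    obtain rfl : ts' = [] := List.length_eq_zero_iff.1 hlen.symm
    exact fun L => .refl _
  | cons u ts ih =>
    obtain _ | ⟨u', ts'⟩ := ts'
    · simp at hlen
    intro L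
    have hchild : EqE E (.node f (L ++ u :: ts)) (.node f (L ++ u' :: ts)) := by
      simpa [List.set_append_right] using
        node_set (f := f) (ts := L ++ u :: ts) (k := L.length) (by simp) (h 0 u u' rfl rfl)
    have htail := ih (ts' := ts') (by simpa using hlen)
      (fun k v v' hv hv' => h (k + 1) v v' hv hv') (L ++ [u'])
    simp only [List.append_assoc, List.singleton_append] at htail
    exact hchild.trans htail

end Rewriting

section LiftRel

variable {F : Type} (E : List (Pat F × Pat F)) (P : RTerm F → RTerm F → Prop) (m : ℕ)

/-- `LiftRel E P m a b`: `b` is obtained from `a` by keeping the symbols above height `m` and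
replacing subterms of height at most `m`, taken modulo `E`, by a `P`-partner. -/
inductive LiftRel : RTerm F → RTerm F → Prop
  | base {a a₀ b : RTerm F} : EqE E a a₀ → P a₀ b → LiftRel a b
  | const (c : F) : LiftRel (.node c []) (.node c [])
  | node {f : F} {ts ts' : List (RTerm F)} : m < (RTerm.node f ts).height →
      ts.length = ts'.length →
      (∀ (k : ℕ) u u', ts[k]? = some u → ts'[k]? = some u' → LiftRel u u') →
      LiftRel (.node f ts) (.node f ts')

structure LiftRel.Compatible : Prop where
  height_le : ∀ a b, P a b → a.height ≤ m
  eq_of_height_eq_zero : ∀ a b, P a b → a.height = 0 → b = a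
  eqE_iff : ∀ a b a' b', P a b → P a' b' → (EqE E a a' ↔ EqE E b b')

variable {E P m} {ar : F → ℕ}

namespace LiftRel

theorem height_le_of_base (hE : ∀ e ∈ E, IsFlatEq ar e) (hP : Compatible E P m)
    {a a₀ b : RTerm F} (ha : EqE E a a₀) (hab : P a₀ b) : a.height ≤ m :=
  (ha.height_eq hE).trans_le (hP.height_le _ _ hab)

theorem eqE_of_const (hE : ∀ e ∈ E, IsFlatEq ar e) (hP : Compatible E P m) {c : F}
    {b : RTerm F} (h : LiftRel E P m (.node c []) b) : EqE E b (.node c []) := by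
  cases h with
  | base ha hab =>
    have h0 : (RTerm.node c []).height = 0 := RTerm.height_eq_zero_iff.2 rfl
    rw [hP.eq_of_height_eq_zero _ _ hab ((ha.height_eq hE).symm.trans h0)]
    exact ha.symm
  | const => exact .refl _
  | node hm => simp [RTerm.height] at hm

theorem right_unique (hE : ∀ e ∈ E, IsFlatEq ar e) (hP : Compatible E P m) {t b₁ b₂ : RTerm F}
    (h₁ : LiftRel E P m t b₁) (h₂ : LiftRel E P m t b₂) : EqE E b₁ b₂ := by
  induction h₁ generalizing b₂ with
  | base ha hab =>
    cases h₂ with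
    | base ha' hab' => exact (hP.eqE_iff _ _ _ _ hab hab').1 (ha.symm.trans ha')
    | const => exact eqE_of_const hE hP (.base ha hab)
    | node hm => have := height_le_of_base hE hP ha hab; omega
  | const => exact (eqE_of_const hE hP h₂).symm
  | node hm hlen _ ih =>
    cases h₂ with
    | base ha hab => have := height_le_of_base hE hP ha hab; omega
    | const => simp [RTerm.height] at hm
    | node _ hlen' hch' =>
      refine EqE.node_congr (hlen.symm.trans hlen') fun k u' u'' hu' hu'' => ?_
      obtain ⟨u, hu⟩ := exists_getElem?_of_length_eq hlen hu'
      exact ih k u u' hu hu' (hch' k u u'' hu hu'')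

theorem subst_of_height_eq_zero {p : Pat F} (hp : p.height = 0) {σ σ' : ℕ → RTerm F}
    (hvar : ∀ v, p.HasVar v → LiftRel E P m (σ v) (σ' v)) :
    LiftRel E P m (p.subst σ) (p.subst σ') := by
  rcases Pat.eq_var_or_const_of_height_eq_zero hp with ⟨v, rfl⟩ | ⟨c, rfl⟩
  · simpa using hvar v .var
  · simpa using LiftRel.const (E := E) (P := P) (m := m) c

theorem subst {p : Pat F} (hp : p.height ≤ 1) {σ σ' : ℕ → RTerm F}
    (hvar : ∀ v, p.HasVar v → LiftRel E P m (σ v) (σ' v))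
    (hm : p.height = 1 → m < (p.subst σ).height) :
    LiftRel E P m (p.subst σ) (p.subst σ') := by
  rcases Nat.le_one_iff_eq_zero_or_eq_one.1 hp with h0 | h1
  · exact subst_of_height_eq_zero h0 hvar
  rcases p with v | ⟨f, ps⟩
  · simp [Pat.height] at h1
  simp only [Pat.subst_node] at hm ⊢
  refine .node (hm h1) ?_ fun k u u' hu hu' => ?_
  · simp
  simp only [List.getElem?_map, Option.map_eq_some_iff] at hu hu'
  obtain ⟨q, hq, rfl⟩ := hu
  obtain ⟨q', hq', rfl⟩ := hu'
  cases hq.symm.trans hq'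
  have hqmem := List.mem_of_getElem? hq
  exact subst_of_height_eq_zero (Pat.height_eq_zero_of_mem hp hqmem)
    fun v hv => hvar v (Pat.hasVar_node_iff.2 ⟨q, hqmem, hv⟩)

/-- The step `l σ → r σ` is simulated by `l σ' → r σ'`, where `σ'` lifts `σ` on the variables
of `l`. -/
theorem exists_of_rew_root (hE : ∀ e ∈ E, IsFlatEq ar e) (hP : Compatible E P m)
    {l r : Pat F} (hlr : (l, r) ∈ E ∨ (r, l) ∈ E) {σ : ℕ → RTerm F} {f : F}
    {ss ss' : List (RTerm F)} (hs : RTerm.node f ss = l.subst σ)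
    (hm : m < (RTerm.node f ss).height) (hlen : ss.length = ss'.length)
    (hch : ∀ (k : ℕ) u u', ss[k]? = some u → ss'[k]? = some u' → LiftRel E P m u u') :
    ∃ b', LiftRel E P m (r.subst σ) b' ∧ EqE E (.node f ss') b' := by
  have hflat := isFlatEq_of_mem hE hlr
  have hheight := hflat.height_subst σ
  obtain ⟨-, -, hh, hl1, hv⟩ := hflat
  rcases l with x | ⟨g, ps⟩
  · obtain rfl : r = .var x :=
      Pat.eq_var_of_hasVar (by simpa [Pat.height] using hh.symm) ((hv x).1 .var)
    exact ⟨_, hs ▸ .node hm hlen hch, .refl _⟩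
  rw [Pat.subst_node] at hs
  obtain ⟨rfl, rfl⟩ := RTerm.node.inj hs
  have hps : ∀ q ∈ ps, q.height = 0 := fun q => Pat.height_eq_zero_of_mem hl1
  have hex : ∀ x, (Pat.node f ps).HasVar x → ∃ b, LiftRel E P m (σ x) b := by
    intro x hx
    obtain ⟨q, hq, hxq⟩ := Pat.hasVar_node_iff.1 hx
    obtain rfl := Pat.eq_var_of_hasVar (hps q hq) hxq
    obtain ⟨k, hk⟩ := List.mem_iff_getElem?.1 hq
    have hk' : (ps.map (Pat.subst σ))[k]? = some (σ x) := by simp [hk]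
    obtain ⟨u', hu'⟩ := exists_getElem?_of_length_eq hlen.symm hk'
    exact ⟨u', hch k _ u' hk' hu'⟩
  have : Nonempty (RTerm F) := ⟨σ 0⟩
  choose! σ' hσ' using hex
  have hlift : EqE E (.node f ss') ((Pat.node f ps).subst σ') := by
    rw [Pat.subst_node]
    refine EqE.node_congr (by simp [← hlen]) fun k u' w hu' hw => ?_
    simp only [List.getElem?_map, Option.map_eq_some_iff] at hw
    obtain ⟨q, hq, rfl⟩ := hw
    have hqmem := List.mem_of_getElem? hq
    refine right_unique hE hP (hch k _ u' (by simp [hq]) hu')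
      (subst_of_height_eq_zero (hps q hqmem) fun v hv => hσ' v ?_)
    exact Pat.hasVar_node_iff.2 ⟨q, hqmem, hv⟩
  have hstep : Rew E ((Pat.node f ps).subst σ') (r.subst σ') :=
    ⟨_, r, hlr, σ', [], .refl _, .here _ _⟩
  refine ⟨r.subst σ', subst (hh ▸ hl1) (fun x hx => hσ' x ((hv x).2 hx)) fun _ => ?_,
    hlift.trans (.of_rew hstep)⟩
  rwa [← hheight, Pat.subst_node]

theorem exists_of_rew (hE : ∀ e ∈ E, IsFlatEq ar e) (hP : Compatible E P m) {s b t : RTerm F}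
    (h : LiftRel E P m s b) (hst : Rew E s t) : ∃ b', LiftRel E P m t b' ∧ EqE E b b' := by
  induction h generalizing t with
  | base ha hab => exact ⟨_, .base ((EqE.of_rew hst.symm).trans ha) hab, .refl _⟩
  | const c =>
    obtain ⟨g, ts⟩ := t
    obtain rfl : ts = [] := RTerm.height_eq_zero_iff.1
      ((hst.height_eq hE).symm.trans (RTerm.height_eq_zero_iff.2 rfl))
    exact ⟨_, .const g, .of_rew hst⟩
  | node hm hlen hch ih =>
    rcases hst.root_or_child with ⟨l, r, hlr, σ, hs, rfl⟩ | ⟨k, u, w, hk, huw, rfl⟩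
    · exact exists_of_rew_root hE hP hlr hs hm hlen hch
    obtain ⟨u', hu'⟩ := exists_getElem?_of_length_eq hlen.symm hk
    obtain ⟨w', hw', huw'⟩ := ih k u u' hk hu' huw
    refine ⟨_, .node ?_ (by simpa using hlen) fun k' v v' hv hv' => ?_, EqE.node_set hu' huw'⟩
    · rwa [RTerm.height_node_set hk (huw.height_eq hE).symm]
    rcases eq_or_ne k k' with rfl | hne
    · rw [List.getElem?_set_self (List.getElem?_eq_some_iff.1 hk).1] at hv
      rw [List.getElem?_set_self (List.getElem?_eq_some_iff.1 hu').1] at hv'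
      cases hv
      cases hv'
      exact hw'
    · rw [List.getElem?_set_ne hne] at hv hv'
      exact hch k' v v' hv hv'

theorem eqE_of_eqE (hE : ∀ e ∈ E, IsFlatEq ar e) (hP : Compatible E P m) {s t b b' : RTerm F}
    (hst : EqE E s t) (hb : LiftRel E P m s b) (hb' : LiftRel E P m t b') : EqE E b b' := by
  induction hst using Relation.ReflTransGen.head_induction_on generalizing b with
  | refl => exact right_unique hE hP hb hb'
  | head hr _ ih =>
    obtain ⟨b₁, hb₁, hbb₁⟩ := exists_of_rew hE hP hb hr
    exact hbb₁.trans (ih hb₁)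

end LiftRel

end LiftRel

section Pumping

variable {F Q : Type} {E : List (Pat F × Pat F)} {r : Run F Q} {i j : ℕ} {I : List ℕ → List ℕ}

open RTerm

theorem Run.term_node (ρ : Rule F Q) (ts : List (Run F Q)) :
    Run.term (.node ρ ts) = .node ρ.sym (ts.map Run.term) :=
  map_node _ _ _

theorem Run.height_term (u : Run F Q) : (Run.term u).height = u.height :=
  height_map _ u

theorem LiftRel.term_node {P : RTerm F → RTerm F → Prop} {m : ℕ} {ρ : Rule F Q}
    {ts ts' : List (Run F Q)} (hm : m < (RTerm.node ρ ts).height) (hlen : ts.length = ts'.length)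
    (hch : ∀ (k : ℕ) c c', ts[k]? = some c → ts'[k]? = some c' →
      LiftRel E P m (Run.term c) (Run.term c')) :
    LiftRel E P m (Run.term (.node ρ ts)) (Run.term (.node ρ ts')) := by
  simp only [Run.term_node]
  refine .node (by rwa [← Run.term_node, Run.height_term]) (by simpa using hlen)
    fun k a b ha hb => ?_
  simp only [List.getElem?_map, Option.map_eq_some_iff] at ha hb
  obtain ⟨c, hc, rfl⟩ := ha
  obtain ⟨c', hc', rfl⟩ := hb
  exact hch k c c' hc hc'

theorem exists_subAt_of_mem_dom {p : List ℕ} (h : p ∈ Dom r i) : ∃ s, SubAt r p s := by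
  rcases h with (⟨s, hs, -⟩ | ⟨-, -, -, s, -, -, hs, -⟩) | ⟨-, -, -, s, -, -, hs, -⟩ <;>
    exact ⟨s, hs⟩

theorem height_le_of_mem_dom {p : List ℕ} {s : Run F Q} (h : p ∈ Dom r i) (hs : SubAt r p s) :
    s.height ≤ i := by
  rcases h with (⟨s', hs', -, hh⟩ | ⟨-, -, -, s', -, -, hs', -, hlt, -⟩) |
    ⟨-, -, -, s', -, -, hs', h0, -⟩ <;> cases hs.unique hs' <;> omega

theorem lt_height_of_prefix_of_mem_dom {pb q : List ℕ} {s : Run F Q} (hpb : pb ∈ Dom r i)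
    (hq : q <+: pb) (hne : q ≠ pb) (hs : SubAt r q s) : i < s.height := by
  rcases hpb with (⟨sb, hsb, -, rfl⟩ | ⟨pp, k, sp, -, rfl, hsp, -, -, -, hgt⟩) |
    ⟨pp, k, sp, -, rfl, hsp, -, -, -, hgt⟩
  · exact hs.height_lt_of_prefix hq hne hsb
  all_goals exact hgt.trans_le (hs.height_le_of_prefix
    ((List.prefix_concat_iff.1 hq).resolve_left hne) hsp)

theorem not_mem_dom_of_prefix_of_mem_dom {pb q : List ℕ} (hpb : pb ∈ Dom r i) (hq : q <+: pb)
    (hne : q ≠ pb) : q ∉ Dom r i := fun hqD => by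
  obtain ⟨s, hs⟩ := exists_subAt_of_mem_dom hqD
  have := lt_height_of_prefix_of_mem_dom hpb hq hne hs
  have := height_le_of_mem_dom hqD hs
  omega

theorem mem_dom_or_lt_height_of_child (hi : 0 < i) {p : List ℕ} {ρ : Rule F Q}
    {ts : List (Run F Q)} {k : ℕ} {c : Run F Q} (hs : SubAt r p (.node ρ ts))
    (hgt : i < (RTerm.node ρ ts).height) (hk : ts[k]? = some c) :
    p ++ [k] ∈ Dom r i ∨ i < c.height := by
  have hc := hs.child hk
  rcases lt_or_ge i c.height with h | h
  · exact .inr h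
  refine .inl ?_
  rcases Nat.eq_zero_or_pos c.height with h0 | hpos
  · exact .inr ⟨p, k, _, c, rfl, hs, hc, h0, hi, hgt⟩
  rcases h.eq_or_lt with heq | hlt
  · exact .inl (.inl ⟨c, hc, hpos, heq⟩)
  · exact .inl (.inr ⟨p, k, _, c, rfl, hs, hc, hpos, hlt, hgt⟩)

namespace PumpInj

theorem mapsTo_dom (hI : PumpInj E r i j I) : Set.MapsTo I (Dom r i) (Dom r j) := by
  rintro p ((h | h) | h)
  · exact .inl (.inl (hI.mapsH h))
  · exact .inl (.inr (hI.mapsHc h))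
  · exact .inr (hI.mapsHr h)

theorem apply_eq_of_height_eq_zero (hI : PumpInj E r i j I) {p : List ℕ} {s : Run F Q}
    (hp : p ∈ Dom r i) (hs : SubAt r p s) (h0 : s.height = 0) : I p = p := by
  rcases hp with (⟨s', hs', hpos, -⟩ | ⟨-, -, -, s', -, -, hs', hpos, -⟩) | hp
  · cases hs.unique hs'
    omega
  · cases hs.unique hs'
    omega
  · exact hI.idRing p hp

theorem apply_eq_of_height_apply_eq_zero (hI : PumpInj E r i j I) {p : List ℕ} {s : Run F Q}
    (hp : p ∈ Dom r i) (hs : SubAt r (I p) s) (h0 : s.height = 0) : I p = p := by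
  rcases hp with (hp | hp) | hp
  · obtain ⟨s', hs', hpos, -⟩ := hI.mapsH hp
    cases hs.unique hs'
    omega
  · obtain ⟨-, -, -, s', -, -, hs', hpos, -⟩ := hI.mapsHc hp
    cases hs.unique hs'
    omega
  · exact hI.idRing p hp

end PumpInj

def PumpPair (r : Run F Q) (i : ℕ) (I : List ℕ → List ℕ) (a b : RTerm F) : Prop :=
  ∃ p ∈ Dom r i, ∃ s s', SubAt r p s ∧ SubAt r (I p) s' ∧ a = Run.term s ∧ b = Run.term s'

theorem PumpInj.compatible (hI : PumpInj E r i j I) :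
    LiftRel.Compatible E (PumpPair r i I) i where
  height_le := by
    rintro _ _ ⟨p, hp, s, s', hs, -, rfl, rfl⟩
    rw [Run.height_term]
    exact height_le_of_mem_dom hp hs
  eq_of_height_eq_zero := by
    rintro _ _ ⟨p, hp, s, s', hs, hs', rfl, rfl⟩ h0
    rw [Run.height_term] at h0
    rw [hI.apply_eq_of_height_eq_zero hp hs h0] at hs'
    rw [hs'.unique hs]
  eqE_iff := by
    rintro _ _ _ _ ⟨p, hp, s, s', hs, hs', rfl, rfl⟩ ⟨q, hq, u, u', hu, hu', rfl, rfl⟩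
    exact hI.eqPres p q hp hq s u s' u' hs hu hs' hu'

theorem PumpInj.compatible_flip (hI : PumpInj E r i j I) :
    LiftRel.Compatible E (flip (PumpPair r i I)) j where
  height_le := by
    rintro _ _ ⟨p, hp, s, s', -, hs', rfl, rfl⟩
    rw [Run.height_term]
    exact height_le_of_mem_dom (hI.mapsTo_dom hp) hs'
  eq_of_height_eq_zero := by
    rintro _ _ ⟨p, hp, s, s', hs, hs', rfl, rfl⟩ h0
    rw [Run.height_term] at h0
    rw [hI.apply_eq_of_height_apply_eq_zero hp hs' h0] at hs'
    rw [hs.unique hs']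
  eqE_iff := by
    rintro _ _ _ _ ⟨p, hp, s, s', hs, hs', rfl, rfl⟩ ⟨q, hq, u, u', hu, hu', rfl, rfl⟩
    exact (hI.eqPres p q hp hq s u s' u' hs hu hs' hu').symm

theorem MultiRepl.exists_subAt {β : Type} {D : Set (List ℕ)} {ρ : List ℕ → RTerm β → Prop}
    {q p : List ℕ} {u u' s : RTerm β} (h : MultiRepl D ρ p u u')
    (hD : ∀ q', q' <+: q → q' ≠ q → p ++ q' ∉ D) (hs : SubAt u q s) :
    ∃ s', SubAt u' q s' ∧ MultiRepl D ρ (p ++ q) s s' := by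
  induction q generalizing p u u' with
  | nil =>
    cases hs
    exact ⟨u', .refl _, by simpa using h⟩
  | cons k q ih =>
    cases hs with
    | step hk hs =>
      cases h with
      | here hp => exact absurd hp (by simpa using hD [] List.nil_prefix (by simp))
      | node _ hlen hch =>
        obtain ⟨c', hc'⟩ := exists_getElem?_of_length_eq hlen.symm hk
        obtain ⟨s', hs', hmr⟩ := ih (hch k _ c' hk hc')
          (fun q' hq' hne => by
            simpa using hD (k :: q') (List.cons_prefix_cons.2 ⟨rfl, hq'⟩) (by simpa using hne))
          hs
        exact ⟨s', .step hc' hs', by simpa using hmr⟩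

theorem MultiRepl.lt_height (hmaps : Set.MapsTo I (Hset r i) (Hset r j)) (hi : 0 < i)
    {p : List ℕ} {u u' : Run F Q} (h : MultiRepl (Dom r i) (fun p s => SubAt r (I p) s) p u u')
    (hs : SubAt r p u) (hgt : i < u.height) : j < u'.height := by
  induction h with
  | here hp _ =>
    have := height_le_of_mem_dom hp hs
    omega
  | @node p f ts ts' _ hlen hch ih =>
    obtain ⟨c, hc, hceq⟩ :=
      exists_mem_height_eq (f := f) (ts := ts) (n := (RTerm.node f ts).height - 1) (by omega)
    obtain ⟨k, hk⟩ := List.mem_iff_getElem?.1 hc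
    obtain ⟨c', hk'⟩ := exists_getElem?_of_length_eq hlen.symm hk
    have hlt := height_lt_of_mem (f := f) (List.mem_of_getElem? hk')
    rcases lt_or_ge i c.height with hci | hci
    · exact (ih k c c' hk hk' (hs.child hk) hci).trans hlt
    -- the child of maximal height is in `H_i`, so its replacement has height `j`
    have hH : p ++ [k] ∈ Hset r i := ⟨c, hs.child hk, by omega, by omega⟩
    cases hch k c c' hk hk' with
    | here _ hc' =>
      obtain ⟨s₀, hs₀, -, hj⟩ := hmaps hH
      cases hc'.unique hs₀
      omega
    | node hnot => exact absurd (.inl (.inl hH)) hnot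

theorem MultiRepl.liftRel (hI : PumpInj E r i j I) (hi : 0 < i) {p : List ℕ} {u u' : Run F Q}
    (h : MultiRepl (Dom r i) (fun p s => SubAt r (I p) s) p u u') (hs : SubAt r p u)
    (hu : p ∈ Dom r i ∨ i < u.height) :
    LiftRel E (PumpPair r i I) i (Run.term u) (Run.term u') ∧
      LiftRel E (flip (PumpPair r i I)) j (Run.term u') (Run.term u) := by
  induction h with
  | here hp hu' =>
    exact ⟨.base (.refl _) ⟨_, hp, _, _, hs, hu', rfl, rfl⟩,
      .base (.refl _) ⟨_, hp, _, _, hs, hu', rfl, rfl⟩⟩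
  | @node p ρ ts ts' hp hlen hch ih =>
    have hgt := hu.resolve_left hp
    have hgt' := (MultiRepl.node hp hlen hch).lt_height hI.mapsH hi hs hgt
    have hchild (k : ℕ) c c' (hc : ts[k]? = some c) (hc' : ts'[k]? = some c') :=
      ih k c c' hc hc' (hs.child hc) (mem_dom_or_lt_height_of_child hi hs hgt hc)
    exact ⟨LiftRel.term_node hgt hlen fun k c c' hc hc' => (hchild k c c' hc hc').1,
      LiftRel.term_node hgt' hlen.symm fun k c' c hc' hc => (hchild k c c' hc hc').2⟩

theorem IsGlobalPumpingWith.exists_liftRel {r' : Run F Q}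
    (hpump : IsGlobalPumpingWith E r i j I r') (hi : 0 < i) {p : List ℕ}
    (hp : ∃ pb ∈ Dom r i, p <+: pb) :
    ∃ s s', SubAt r p s ∧ SubAt r' p s' ∧
      LiftRel E (PumpPair r i I) i (Run.term s) (Run.term s') ∧
      LiftRel E (flip (PumpPair r i I)) j (Run.term s') (Run.term s) := by
  obtain ⟨pb, hpb, hprefix⟩ := hp
  obtain ⟨sb, hsb⟩ := exists_subAt_of_mem_dom hpb
  obtain ⟨rest, rfl⟩ := hprefix
  obtain ⟨s, hs, -⟩ := hsb.of_append
  have hD : ∀ q, q <+: p → q ≠ p → [] ++ q ∉ Dom r i := fun q hq hne => by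
    rw [List.nil_append]
    refine not_mem_dom_of_prefix_of_mem_dom hpb (hq.trans (List.prefix_append _ _)) fun heq => ?_
    exact hne (hq.eq_of_length
      (le_antisymm hq.length_le (by rw [heq, List.length_append]; omega)))
  obtain ⟨s', hs', hmr⟩ := hpump.2.exists_subAt hD hs
  rw [List.nil_append] at hmr
  have hcond : p ∈ Dom r i ∨ i < s.height := by
    by_cases hpe : p = p ++ rest
    · exact .inl (hpe ▸ hpb)
    · exact .inr (lt_height_of_prefix_of_mem_dom hpb (List.prefix_append _ _) hpe hs)
  exact ⟨s, s', hs, hs', hmr.liftRel hpump.1 hi hs hcond⟩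

end Pumping

theorem global_pumping_preserves_equalities_general {F Q : Type} (A : TABG F Q)
    (hwf : A.WF)
    (r : Run F Q)
    (i j : ℕ) (hij : j < i)
    (I : List ℕ → List ℕ) (r' : Run F Q)
    (hpump : IsGlobalPumpingWith A.eqs r i j I r')
    (p1 p2 : List ℕ)
    (h1 : ∃ pb ∈ Dom r i, p1 <+: pb) (h2 : ∃ pb ∈ Dom r i, p2 <+: pb) :
    (RTerm.IsPos r' p1 ∧ RTerm.IsPos r' p2) ∧
    (∀ s1 s2 s1' s2', RTerm.SubAt r p1 s1 → RTerm.SubAt r p2 s2 →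
      RTerm.SubAt r' p1 s1' → RTerm.SubAt r' p2 s2' →
      (EqE A.eqs (Run.term s1) (Run.term s2) ↔
        EqE A.eqs (Run.term s1') (Run.term s2'))) := by
  obtain ⟨s1, s1', hs1, hs1', fwd1, bwd1⟩ := hpump.exists_liftRel (Nat.zero_lt_of_lt hij) h1
  obtain ⟨s2, s2', hs2, hs2', fwd2, bwd2⟩ := hpump.exists_liftRel (Nat.zero_lt_of_lt hij) h2
  refine ⟨⟨⟨s1', hs1'⟩, ⟨s2', hs2'⟩⟩, fun t1 t2 t1' t2' ht1 ht2 ht1' ht2' => ?_⟩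
  rw [ht1.unique hs1, ht2.unique hs2, ht1'.unique hs1', ht2'.unique hs2']
  exact ⟨fun h => LiftRel.eqE_of_eqE hwf.1 hpump.1.compatible h fwd1 fwd2,
    fun h => LiftRel.eqE_of_eqE hwf.1 hpump.1.compatible_flip h bwd1 bwd2⟩

/-- A global pumping preserves equalities and disequalities
modulo `E` between the subterms at positions which are prefixes of positions of
`H_i ∪ Ȟ_i ∪ H̊_i`. -/
theorem global_pumping_preserves_equalities {F Q : Type} (A : TABG F Q)
    (hwf : A.WF) (hconj : A.gc.IsConjAtoms) (hatoms : A.gc.AtomsAre GAtom.IsEqNeq)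
    (r : Run F Q) (hrun : IsRun A.rules A.eqs r)
    (hsat : satGC A.eqs Rule.res Rule.sym r A.gc)
    (i j : ℕ) (hj : 1 ≤ j) (hij : j < i) (hi : i ≤ RTerm.height r)
    (I : List ℕ → List ℕ) (r' : Run F Q)
    (hpump : IsGlobalPumpingWith A.eqs r i j I r')
    (p1 p2 : List ℕ)
    (h1 : ∃ pb ∈ Dom r i, p1 <+: pb) (h2 : ∃ pb ∈ Dom r i, p2 <+: pb) :
    (RTerm.IsPos r' p1 ∧ RTerm.IsPos r' p2) ∧
    (∀ s1 s2 s1' s2', RTerm.SubAt r p1 s1 → RTerm.SubAt r p2 s2 →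
      RTerm.SubAt r' p1 s1' → RTerm.SubAt r' p2 s2' →
      (EqE A.eqs (Run.term s1) (Run.term s2) ↔
        EqE A.eqs (Run.term s1') (Run.term s2'))) :=
  global_pumping_preserves_equalities_general A hwf r i j hij I r' hpump p1 p2 h1 h2

end TreeAut
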